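/- The curve β(s) = (a cos(ws), a sin(ws), bws) with a,b > 0, w > 0, a²w² + b²w² = 1, is unit-speed with curvature κ = aw² and torsion τ = bw², and applying the construction once more (κ̄(s) = aw² cos(bw²s), τ̄(s) = aw² sin(bw²s)) yields a curve J²(γ) whose curvature and torsion satisfy κ̄² + τ̄² = a²w⁴ (constant); i.e. J²(γ) is a curve of constant precession (a Mannheim curve). -/

import Mathlib

/-!
The helix and all of its derivatives lie in the family of curves
`s ↦ cos (w s) • u + sin (w s) • v + s • c + d`, which is closed under differentiation.
Differentiating symbolically inside this family gives `β'`, `β''`, `β'''` in closed form, and the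
norm and determinant identities then reduce to `sin² + cos² = 1`.
-/

noncomputable def det3 (a b c : EuclideanSpace ℝ (Fin 3)) : ℝ :=
  Matrix.det (Matrix.of ![(a : Fin 3 → ℝ), b, c])

noncomputable def vec3 (x y z : ℝ) : EuclideanSpace ℝ (Fin 3) := WithLp.toLp 2 ![x, y, z]

open Real

section TrigCurve

variable {E : Type*} [NormedAddCommGroup E] [NormedSpace ℝ E]

noncomputable def trigCurve (w : ℝ) (u v c d : E) (s : ℝ) : E :=
  cos (w * s) • u + sin (w * s) • v + s • c + d

theorem hasDerivAt_trigCurve (w : ℝ) (u v c d : E) (s : ℝ) :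
    HasDerivAt (trigCurve w u v c d) (trigCurve w (w • v) (-(w • u)) 0 c s) s := by
  have hws : HasDerivAt (fun t => w * t) w s := by simpa using (hasDerivAt_id s).const_mul w
  have hcos := ((hasDerivAt_cos (w * s)).comp s hws).smul_const u
  have hsin := ((hasDerivAt_sin (w * s)).comp s hws).smul_const v
  refine (((hcos.add hsin).add ((hasDerivAt_id s).smul_const c)).add_const d).congr_deriv ?_
  simp only [trigCurve, smul_smul, smul_neg, neg_mul, neg_smul, smul_zero, one_smul, add_zero]
  abel

theorem deriv_trigCurve (w : ℝ) (u v c d : E) :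
    deriv (trigCurve w u v c d) = trigCurve w (w • v) (-(w • u)) 0 c :=
  funext fun s => (hasDerivAt_trigCurve w u v c d s).deriv

end TrigCurve

theorem vec3_add (x y z x' y' z' : ℝ) :
    vec3 x y z + vec3 x' y' z' = vec3 (x + x') (y + y') (z + z') := by
  ext i; fin_cases i <;> simp [vec3]

theorem smul_vec3 (r x y z : ℝ) : r • vec3 x y z = vec3 (r * x) (r * y) (r * z) := by
  ext i; fin_cases i <;> simp [vec3]

theorem neg_vec3 (x y z : ℝ) : -vec3 x y z = vec3 (-x) (-y) (-z) := by
  ext i; fin_cases i <;> simp [vec3]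

theorem vec3_zero : vec3 0 0 0 = 0 := by
  ext i; fin_cases i <;> simp [vec3]

theorem norm_vec3 (x y z : ℝ) : ‖vec3 x y z‖ = √(x ^ 2 + y ^ 2 + z ^ 2) := by
  simp [vec3, EuclideanSpace.norm_eq, Fin.sum_univ_three]

theorem det3_vec3 (x y z x' y' z' x'' y'' z'' : ℝ) :
    det3 (vec3 x y z) (vec3 x' y' z') (vec3 x'' y'' z'') =
      x * (y' * z'' - z' * y'') - y * (x' * z'' - z' * x'') + z * (x' * y'' - y' * x'') := by
  simp [det3, vec3, Matrix.det_fin_three]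
  ring

theorem trigCurve_vec3 (w s u₁ u₂ u₃ v₁ v₂ v₃ c₁ c₂ c₃ d₁ d₂ d₃ : ℝ) :
    trigCurve w (vec3 u₁ u₂ u₃) (vec3 v₁ v₂ v₃) (vec3 c₁ c₂ c₃) (vec3 d₁ d₂ d₃) s =
      vec3 (cos (w * s) * u₁ + sin (w * s) * v₁ + s * c₁ + d₁)
        (cos (w * s) * u₂ + sin (w * s) * v₂ + s * c₂ + d₂)
        (cos (w * s) * u₃ + sin (w * s) * v₃ + s * c₃ + d₃) := by
  simp only [trigCurve, smul_vec3, vec3_add]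

noncomputable def helix (a b w s : ℝ) : EuclideanSpace ℝ (Fin 3) :=
  vec3 (a * cos (w * s)) (a * sin (w * s)) (b * w * s)

theorem helix_eq_trigCurve (a b w : ℝ) :
    helix a b w = trigCurve w (vec3 a 0 0) (vec3 0 a 0) (vec3 0 0 (b * w)) (vec3 0 0 0) := by
  funext s
  rw [helix, trigCurve_vec3]
  congr 1 <;> ring

theorem deriv_helix (a b w s : ℝ) :
    deriv (helix a b w) s = vec3 (-(a * w) * sin (w * s)) (a * w * cos (w * s)) (b * w) := by
  rw [helix_eq_trigCurve, deriv_trigCurve, ← vec3_zero]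
  simp only [smul_vec3, neg_vec3, trigCurve_vec3]
  congr 1 <;> ring

theorem deriv_deriv_helix (a b w s : ℝ) :
    deriv (deriv (helix a b w)) s =
      vec3 (-(a * w ^ 2) * cos (w * s)) (-(a * w ^ 2) * sin (w * s)) 0 := by
  rw [helix_eq_trigCurve, deriv_trigCurve, deriv_trigCurve, ← vec3_zero]
  simp only [smul_vec3, neg_vec3, trigCurve_vec3]
  congr 1 <;> ring

theorem deriv_deriv_deriv_helix (a b w s : ℝ) :
    deriv (deriv (deriv (helix a b w))) s =
      vec3 (a * w ^ 3 * sin (w * s)) (-(a * w ^ 3) * cos (w * s)) 0 := by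
  rw [helix_eq_trigCurve, deriv_trigCurve, deriv_trigCurve, deriv_trigCurve, ← vec3_zero]
  simp only [smul_vec3, neg_vec3, trigCurve_vec3]
  congr 1 <;> ring

theorem norm_deriv_helix {a b w : ℝ} (h : a ^ 2 * w ^ 2 + b ^ 2 * w ^ 2 = 1) (s : ℝ) :
    ‖deriv (helix a b w) s‖ = 1 := by
  rw [deriv_helix, norm_vec3, sqrt_eq_one]
  linear_combination h + a ^ 2 * w ^ 2 * sin_sq_add_cos_sq (w * s)

theorem norm_deriv_deriv_helix {a : ℝ} (ha : 0 ≤ a) (b w s : ℝ) :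
    ‖deriv (deriv (helix a b w)) s‖ = a * w ^ 2 := by
  rw [deriv_deriv_helix, norm_vec3, sqrt_eq_iff_eq_sq (by positivity) (by positivity)]
  linear_combination (a * w ^ 2) ^ 2 * cos_sq_add_sin_sq (w * s)

theorem det3_deriv_helix (a b w s : ℝ) :
    det3 (deriv (helix a b w) s) (deriv (deriv (helix a b w)) s)
      (deriv (deriv (deriv (helix a b w))) s) = a ^ 2 * b * w ^ 6 := by
  rw [deriv_helix, deriv_deriv_helix, deriv_deriv_deriv_helix, det3_vec3]
  linear_combination a ^ 2 * b * w ^ 6 * cos_sq_add_sin_sq (w * s)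

theorem stmt_12_general (a b w : ℝ) (ha : 0 < a) (hw : 0 < w)
    (h1 : a ^ 2 * w ^ 2 + b ^ 2 * w ^ 2 = 1)
    (β : ℝ → EuclideanSpace ℝ (Fin 3))
    (hβ : ∀ s, β s = vec3 (a * Real.cos (w * s)) (a * Real.sin (w * s)) (b * w * s)) :
    (∀ s : ℝ, ‖deriv β s‖ = 1) ∧
    (∀ s : ℝ, ‖deriv (deriv β) s‖ = a * w ^ 2) ∧
    (∀ s : ℝ,
      det3 (deriv β s) (deriv (deriv β) s) (deriv (deriv (deriv β)) s)
        / (a * w ^ 2) ^ 2 = b * w ^ 2) ∧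
    (∀ s : ℝ,
      (a * w ^ 2 * Real.cos (b * w ^ 2 * s)) ^ 2
        + (a * w ^ 2 * Real.sin (b * w ^ 2 * s)) ^ 2 = a ^ 2 * w ^ 4) := by
  obtain rfl : β = helix a b w := funext hβ
  refine ⟨norm_deriv_helix h1, norm_deriv_deriv_helix ha.le b w, fun s => ?_, fun s => ?_⟩
  · rw [det3_deriv_helix, div_eq_iff (by positivity)]
    ring
  · linear_combination a ^ 2 * w ^ 4 * cos_sq_add_sin_sq (b * w ^ 2 * s)

theorem stmt_12 (a b w : ℝ) (ha : 0 < a) (hb : 0 < b) (hw : 0 < w)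
    (h1 : a ^ 2 * w ^ 2 + b ^ 2 * w ^ 2 = 1)
    (β : ℝ → EuclideanSpace ℝ (Fin 3))
    (hβ : ∀ s, β s = vec3 (a * Real.cos (w * s)) (a * Real.sin (w * s)) (b * w * s)) :
    (∀ s : ℝ, ‖deriv β s‖ = 1) ∧
    (∀ s : ℝ, ‖deriv (deriv β) s‖ = a * w ^ 2) ∧
    (∀ s : ℝ,
      det3 (deriv β s) (deriv (deriv β) s) (deriv (deriv (deriv β)) s)
        / (a * w ^ 2) ^ 2 = b * w ^ 2) ∧
    (∀ s : ℝ,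
      (a * w ^ 2 * Real.cos (b * w ^ 2 * s)) ^ 2
        + (a * w ^ 2 * Real.sin (b * w ^ 2 * s)) ^ 2 = a ^ 2 * w ^ 4) :=
  stmt_12_general a b w ha hw h1 β hβ
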